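/- arXiv:math/0402017 — 3 statements merged into one kernel-verified Lean document; each statement's English description precedes it below -/
import Mathlib

section
/- Under conditions (A) and (C), the macroscopic fluxes satisfy the Onsager-type symmetry relation: for all θ, τ ∈ ℝ, ∂_θ Ψ̂(θ,τ) = ∂_τ Φ̂(θ,τ), where Φ̂(θ,τ) := Σ_{ω₁,ω₂∈Ω} φ(ω₁,ω₂) π_{θ,τ}(ω₁) π_{θ,τ}(ω₂) and Ψ̂(θ,τ) := Σ_{ω₁,ω₂∈Ω} ψ(ω₁,ω₂) π_{θ,τ}(ω₁) π_{θ,τ}(ω₂). -/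
/-!
Differentiating `π_{θ,τ}` in `θ` multiplies it by the centred variable `ζ̄ = ζ - ⟨ζ⟩_{θ,τ}`, so
`∂_θ Ψ̂` pairs the jump rates with `(η(ω₂') - η(ω₂)) (ζ̄(ω₁) + ζ̄(ω₂))`, the constants `C₁, C₂`
dropping out. By the conservation law (A), the difference of this integrand and its `ζ ↔ η` mirror
is `F(ω₁', ω₂') - F(ω₁, ω₂)` for the antisymmetric `F = ζ̄ ∧ η̄`. Since `π_{θ,τ} / π` is constant
along allowed jumps, summing out the jumps turns the difference into
`∑ π_{θ,τ}(ω₁) π_{θ,τ}(ω₂) F(ω₁, ω₂) Q(ω₁, ω₂)`. Condition (C) makes `Q` a coboundary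
`q(ω₁) - q(ω₂)`, and the pairing then vanishes because `ζ̄` and `η̄` are centred.
-/

open scoped BigOperators

noncomputable section

namespace Stmt0

variable {Ω : Type} [Fintype Ω]

/-- Log-moment generating function `G(θ,τ)`. -/
def Gfun (π : Ω → ℝ) (ζ η : Ω → ℤ) (θ τ : ℝ) : ℝ :=
  Real.log (∑ ω : Ω, Real.exp (θ * (ζ ω : ℝ) + τ * (η ω : ℝ)) * π ω)

/-- The canonical (exponential-family) single-site measure `π_{θ,τ}`. -/
def piCan (π : Ω → ℝ) (ζ η : Ω → ℤ) (θ τ : ℝ) (ω : Ω) : ℝ :=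
  π ω * Real.exp (θ * (ζ ω : ℝ) + τ * (η ω : ℝ) - Gfun π ζ η θ τ)

/-- Condition (A): the rates conserve `ζ` and `η`. -/
def CondA (r : Ω → Ω → Ω → Ω → ℝ) (ζ η : Ω → ℤ) : Prop :=
  ∀ ω₁ ω₂ ω₁' ω₂', 0 < r ω₁ ω₂ ω₁' ω₂' →
    ζ ω₁ + ζ ω₂ = ζ ω₁' + ζ ω₂' ∧ η ω₁ + η ω₂ = η ω₁' + η ω₂'

/-- The quantity `Q(ω₁,ω₂)` appearing in condition (C). -/
def Qfun (π : Ω → ℝ) (r : Ω → Ω → Ω → Ω → ℝ) (ω₁ ω₂ : Ω) : ℝ :=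
  ∑ ω₁' : Ω, ∑ ω₂' : Ω,
    (π ω₁' * π ω₂' / (π ω₁ * π ω₂) * r ω₁' ω₂' ω₁ ω₂ - r ω₁ ω₂ ω₁' ω₂')

/-- Condition (C). -/
def CondC (π : Ω → ℝ) (r : Ω → Ω → Ω → Ω → ℝ) : Prop :=
  ∀ ω₁ ω₂ ω₃, Qfun π r ω₁ ω₂ + Qfun π r ω₂ ω₃ + Qfun π r ω₃ ω₁ = 0

/-- Microscopic flux of `ζ`. -/
def phiF (r : Ω → Ω → Ω → Ω → ℝ) (ζ : Ω → ℤ) (C₁ : ℝ) (ω₁ ω₂ : Ω) : ℝ :=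
  (∑ ω₁' : Ω, ∑ ω₂' : Ω, r ω₁ ω₂ ω₁' ω₂' * ((ζ ω₂' : ℝ) - (ζ ω₂ : ℝ))) + C₁

/-- Expectation of a two-site function under `π_{θ,τ} ⊗ π_{θ,τ}`. -/
def fluxHat (π : Ω → ℝ) (ζ η : Ω → ℤ) (ξ : Ω → Ω → ℝ) (θ τ : ℝ) : ℝ :=
  ∑ ω₁ : Ω, ∑ ω₂ : Ω, ξ ω₁ ω₂ * piCan π ζ η θ τ ω₁ * piCan π ζ η θ τ ω₂

theorem exists_eq_sub_of_cocycle {α : Type*} {Q : α → α → ℝ}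
    (hQ : ∀ x y z, Q x y + Q y z + Q z x = 0) : ∃ q : α → ℝ, ∀ x y, Q x y = q x - q y := by
  rcases isEmpty_or_nonempty α with hα | ⟨⟨z⟩⟩
  · exact ⟨0, fun x => isEmptyElim x⟩
  refine ⟨fun x => Q x z, fun x y => ?_⟩
  linarith [hQ x y z, hQ x z x, hQ x x x]

theorem sum_sum_comm_sum_sum {α β γ δ M : Type*} [Fintype α] [Fintype β] [Fintype γ] [Fintype δ]
    [AddCommMonoid M] (f : α → β → γ → δ → M) :
    ∑ a, ∑ b, ∑ c, ∑ d, f a b c d = ∑ c, ∑ d, ∑ a, ∑ b, f a b c d := by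
  calc ∑ a, ∑ b, ∑ c, ∑ d, f a b c d = ∑ a, ∑ c, ∑ b, ∑ d, f a b c d :=
        Finset.sum_congr rfl fun _ _ => Finset.sum_comm
    _ = ∑ c, ∑ a, ∑ d, ∑ b, f a b c d := by
        rw [Finset.sum_comm]
        exact Finset.sum_congr rfl fun _ _ => Finset.sum_congr rfl fun _ _ => Finset.sum_comm
    _ = ∑ c, ∑ d, ∑ a, ∑ b, f a b c d := Finset.sum_congr rfl fun _ _ => Finset.sum_comm

def wedge {α : Type*} (a b : α → ℝ) (x y : α) : ℝ := a x * b y - a y * b x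

theorem wedge_sub_wedge_of_add_eq {α : Type*} {a b : α → ℝ} {x₁ x₂ y₁ y₂ : α}
    (ha : a x₁ + a x₂ = a y₁ + a y₂) (hb : b x₁ + b x₂ = b y₁ + b y₂) :
    wedge a b y₁ y₂ - wedge a b x₁ x₂ =
      (b y₂ - b x₂) * (a x₁ + a x₂) - (a y₂ - a x₂) * (b x₁ + b x₂) := by
  unfold wedge
  linear_combination (-b y₂) * ha + a y₂ * hb

section Pairing

variable (p : Ω → ℝ)

theorem sum_sum_mul_add_eq_zero {c : Ω → ℝ} (hc : ∑ x, c x * p x = 0) :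
    ∑ x, ∑ y, p x * p y * (c x + c y) = 0 := by
  calc ∑ x, ∑ y, p x * p y * (c x + c y)
      = (∑ x, c x * p x) * (∑ y, p y) + (∑ x, p x) * (∑ y, c y * p y) := by
        simp only [Finset.sum_mul_sum, ← Finset.sum_add_distrib]
        exact Finset.sum_congr rfl fun x _ => Finset.sum_congr rfl fun y _ => by ring
    _ = 0 := by rw [hc]; ring

theorem sum_sum_wedge_mul_sub_eq_zero {a b : Ω → ℝ} (ha : ∑ x, a x * p x = 0)
    (hb : ∑ x, b x * p x = 0) (q : Ω → ℝ) :
    ∑ x, ∑ y, p x * p y * wedge a b x y * (q x - q y) = 0 := by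
  calc ∑ x, ∑ y, p x * p y * wedge a b x y * (q x - q y)
      = (∑ x, a x * p x * q x) * (∑ y, b y * p y) - (∑ x, a x * p x) * (∑ y, b y * p y * q y)
        - (∑ x, b x * p x * q x) * (∑ y, a y * p y)
        + (∑ x, b x * p x) * (∑ y, a y * p y * q y) := by
        simp only [Finset.sum_mul_sum, ← Finset.sum_sub_distrib, ← Finset.sum_add_distrib]
        exact Finset.sum_congr rfl fun x _ => Finset.sum_congr rfl fun y _ => by rw [wedge]; ring
    _ = 0 := by rw [ha, hb]; ring

theorem sum_sum_phiF_mul_add_eq {c : Ω → ℝ} (hc : ∑ x, c x * p x = 0)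
    (r : Ω → Ω → Ω → Ω → ℝ) (g : Ω → ℤ) (C : ℝ) :
    ∑ x₁, ∑ x₂, phiF r g C x₁ x₂ * p x₁ * p x₂ * (c x₁ + c x₂) =
      ∑ x₁, ∑ x₂, ∑ y₁, ∑ y₂,
        r x₁ x₂ y₁ y₂ * (p x₁ * p x₂) * (((g y₂ : ℝ) - g x₂) * (c x₁ + c x₂)) := by
  have hC : ∑ x₁, ∑ x₂, C * (p x₁ * p x₂ * (c x₁ + c x₂)) = 0 := by
    simp only [← Finset.mul_sum, sum_sum_mul_add_eq_zero p hc, mul_zero]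
  rw [← add_zero (∑ x₁, ∑ x₂, ∑ y₁, ∑ y₂, _), ← hC]
  simp only [← Finset.sum_add_distrib]
  refine Finset.sum_congr rfl fun x₁ _ => Finset.sum_congr rfl fun x₂ _ => ?_
  simp only [phiF, add_mul, Finset.sum_mul]
  congr 1
  · exact Finset.sum_congr rfl fun y₁ _ => Finset.sum_congr rfl fun y₂ _ => by ring
  · ring

end Pairing

theorem sum_rate_mul_sub_eq_sum_mul_Qfun {π p : Ω → ℝ} {r : Ω → Ω → Ω → Ω → ℝ}
    (hπ : ∀ ω, π ω ≠ 0)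
    (hp : ∀ x₁ x₂ y₁ y₂, r x₁ x₂ y₁ y₂ ≠ 0 →
      p x₁ * p x₂ * (π y₁ * π y₂) = p y₁ * p y₂ * (π x₁ * π x₂))
    (F : Ω → Ω → ℝ) :
    ∑ x₁, ∑ x₂, ∑ y₁, ∑ y₂, r x₁ x₂ y₁ y₂ * (p x₁ * p x₂) * (F y₁ y₂ - F x₁ x₂) =
      ∑ x₁, ∑ x₂, p x₁ * p x₂ * F x₁ x₂ * Qfun π r x₁ x₂ := by
  have hbalance : ∀ x₁ x₂ y₁ y₂, r x₁ x₂ y₁ y₂ * (p x₁ * p x₂) * (F y₁ y₂ - F x₁ x₂) =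
      p y₁ * p y₂ * F y₁ y₂ * (π x₁ * π x₂ / (π y₁ * π y₂) * r x₁ x₂ y₁ y₂)
        - p x₁ * p x₂ * F x₁ x₂ * r x₁ x₂ y₁ y₂ := by
    intro x₁ x₂ y₁ y₂
    by_cases h : r x₁ x₂ y₁ y₂ = 0
    · simp [h]
    have := hπ y₁
    have := hπ y₂
    field_simp
    linear_combination F y₁ y₂ * hp x₁ x₂ y₁ y₂ h
  simp only [hbalance, Finset.sum_sub_distrib, Qfun, Finset.mul_sum, mul_sub]
  rw [sum_sum_comm_sum_sum]

theorem sum_sum_phiF_mul_add_sub_mean_comm {π p : Ω → ℝ} {r : Ω → Ω → Ω → Ω → ℝ} {ζ η : Ω → ℤ}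
    (hπ : ∀ ω, π ω ≠ 0) (hr : ∀ ω₁ ω₂ ω₁' ω₂', 0 ≤ r ω₁ ω₂ ω₁' ω₂')
    (hA : CondA r ζ η) (hC : CondC π r)
    (hp : ∀ x₁ x₂ y₁ y₂, 0 < r x₁ x₂ y₁ y₂ →
      p x₁ * p x₂ * (π y₁ * π y₂) = p y₁ * p y₂ * (π x₁ * π x₂))
    {m n : ℝ} (hm : ∑ x, ((ζ x : ℝ) - m) * p x = 0) (hn : ∑ x, ((η x : ℝ) - n) * p x = 0)
    (C₁ C₂ : ℝ) :
    ∑ x₁, ∑ x₂, phiF r η C₂ x₁ x₂ * p x₁ * p x₂ * (((ζ x₁ : ℝ) - m) + ((ζ x₂ : ℝ) - m)) =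
      ∑ x₁, ∑ x₂, phiF r ζ C₁ x₁ x₂ * p x₁ * p x₂ * (((η x₁ : ℝ) - n) + ((η x₂ : ℝ) - n)) := by
  have hconserved : ∀ x₁ x₂ y₁ y₂,
      r x₁ x₂ y₁ y₂ * (p x₁ * p x₂) * (((η y₂ : ℝ) - η x₂) * ((ζ x₁ - m) + (ζ x₂ - m)))
        - r x₁ x₂ y₁ y₂ * (p x₁ * p x₂) * (((ζ y₂ : ℝ) - ζ x₂) * ((η x₁ - n) + (η x₂ - n))) =
      r x₁ x₂ y₁ y₂ * (p x₁ * p x₂) *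
        (wedge (fun x => (ζ x : ℝ) - m) (fun x => (η x : ℝ) - n) y₁ y₂
          - wedge (fun x => (ζ x : ℝ) - m) (fun x => (η x : ℝ) - n) x₁ x₂) := by
    intro x₁ x₂ y₁ y₂
    rcases (hr x₁ x₂ y₁ y₂).eq_or_lt with h | h
    · simp [← h]
    obtain ⟨hζ, hη⟩ := hA x₁ x₂ y₁ y₂ h
    have hζ' : (ζ x₁ : ℝ) + ζ x₂ = ζ y₁ + ζ y₂ := by exact_mod_cast hζ
    have hη' : (η x₁ : ℝ) + η x₂ = η y₁ + η y₂ := by exact_mod_cast hη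
    rw [wedge_sub_wedge_of_add_eq (by linear_combination hζ') (by linear_combination hη')]
    ring
  obtain ⟨q, hq⟩ := exists_eq_sub_of_cocycle hC
  rw [← sub_eq_zero, sum_sum_phiF_mul_add_eq p hm, sum_sum_phiF_mul_add_eq p hn]
  simp only [← Finset.sum_sub_distrib, hconserved]
  rw [sum_rate_mul_sub_eq_sum_mul_Qfun hπ (fun _ _ _ _ h => hp _ _ _ _ ((hr _ _ _ _).lt_of_ne' h))]
  simp only [hq]
  exact sum_sum_wedge_mul_sub_eq_zero p hm hn q

section ExponentialFamily

variable {π : Ω → ℝ} {ζ η : Ω → ℤ}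

theorem Gfun_swap (θ τ : ℝ) : Gfun π η ζ τ θ = Gfun π ζ η θ τ := by
  simp only [Gfun, add_comm]

theorem piCan_swap (θ τ : ℝ) : piCan π η ζ τ θ = piCan π ζ η θ τ := by
  ext ω
  simp only [piCan, Gfun_swap, add_comm]

theorem fluxHat_swap (ξ : Ω → Ω → ℝ) (θ τ : ℝ) :
    fluxHat π η ζ ξ τ θ = fluxHat π ζ η ξ θ τ := by
  simp only [fluxHat, piCan_swap]

theorem sum_exp_mul_pos [Nonempty Ω] (hπ : ∀ ω, 0 < π ω) (θ τ : ℝ) :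
    0 < ∑ ω, Real.exp (θ * ζ ω + τ * η ω) * π ω :=
  Finset.sum_pos (fun ω _ => mul_pos (Real.exp_pos _) (hπ ω)) Finset.univ_nonempty

theorem piCan_eq_div (hπ : ∀ ω, 0 < π ω) (θ τ : ℝ) (ω : Ω) :
    piCan π ζ η θ τ ω =
      Real.exp (θ * ζ ω + τ * η ω) * π ω / ∑ x, Real.exp (θ * ζ x + τ * η x) * π x := by
  have : Nonempty Ω := ⟨ω⟩
  rw [piCan, Gfun, Real.exp_sub, Real.exp_log (sum_exp_mul_pos hπ θ τ)]
  ring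

theorem sum_piCan [Nonempty Ω] (hπ : ∀ ω, 0 < π ω) (θ τ : ℝ) : ∑ ω, piCan π ζ η θ τ ω = 1 := by
  simp only [piCan_eq_div hπ, ← Finset.sum_div]
  exact div_self (sum_exp_mul_pos hπ θ τ).ne'

theorem sum_sub_mean_mul_piCan (hπ : ∀ ω, 0 < π ω) (θ τ : ℝ) (c : Ω → ℝ) :
    ∑ x, (c x - ∑ y, c y * piCan π ζ η θ τ y) * piCan π ζ η θ τ x = 0 := by
  rcases isEmpty_or_nonempty Ω with _ | _
  · simp
  simp only [sub_mul, Finset.sum_sub_distrib, ← Finset.mul_sum, sum_piCan hπ, mul_one, sub_self]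

theorem hasDerivAt_Gfun_fst [Nonempty Ω] (hπ : ∀ ω, 0 < π ω) (θ τ : ℝ) :
    HasDerivAt (fun a => Gfun π ζ η a τ) (∑ ω, ζ ω * piCan π ζ η θ τ ω) θ := by
  have hZ : HasDerivAt (fun a => ∑ ω, Real.exp (a * ζ ω + τ * η ω) * π ω)
      (∑ ω, Real.exp (θ * ζ ω + τ * η ω) * ζ ω * π ω) θ :=
    HasDerivAt.fun_sum fun ω _ =>
      (((hasDerivAt_mul_const _).add_const _).exp.mul_const (π ω))
  refine (hZ.log (sum_exp_mul_pos hπ θ τ).ne').congr_deriv ?_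
  simp only [piCan_eq_div hπ, Finset.sum_div, mul_div_assoc']
  exact Finset.sum_congr rfl fun ω _ => by ring

theorem hasDerivAt_piCan_fst (hπ : ∀ ω, 0 < π ω) (θ τ : ℝ) (ω : Ω) :
    HasDerivAt (fun a => piCan π ζ η a τ ω)
      (piCan π ζ η θ τ ω * (ζ ω - ∑ x, ζ x * piCan π ζ η θ τ x)) θ := by
  have : Nonempty Ω := ⟨ω⟩
  refine ((((hasDerivAt_mul_const (ζ ω : ℝ)).add_const (τ * η ω)).fun_sub
    (hasDerivAt_Gfun_fst hπ θ τ)).exp.const_mul (π ω)).congr_deriv ?_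
  rw [piCan]
  ring

theorem hasDerivAt_fluxHat_fst (hπ : ∀ ω, 0 < π ω) (ξ : Ω → Ω → ℝ) (θ τ : ℝ) :
    HasDerivAt (fun a => fluxHat π ζ η ξ a τ)
      (∑ x₁, ∑ x₂, ξ x₁ x₂ * piCan π ζ η θ τ x₁ * piCan π ζ η θ τ x₂ *
        (((ζ x₁ : ℝ) - ∑ x, ζ x * piCan π ζ η θ τ x) +
          ((ζ x₂ : ℝ) - ∑ x, ζ x * piCan π ζ η θ τ x))) θ := by
  refine HasDerivAt.fun_sum fun x₁ _ => HasDerivAt.fun_sum fun x₂ _ => ?_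
  exact (((hasDerivAt_piCan_fst hπ θ τ x₁).const_mul (ξ x₁ x₂)).mul
    (hasDerivAt_piCan_fst hπ θ τ x₂)).congr_deriv (by ring)

theorem hasDerivAt_fluxHat_snd (hπ : ∀ ω, 0 < π ω) (ξ : Ω → Ω → ℝ) (θ τ : ℝ) :
    HasDerivAt (fun b => fluxHat π ζ η ξ θ b)
      (∑ x₁, ∑ x₂, ξ x₁ x₂ * piCan π ζ η θ τ x₁ * piCan π ζ η θ τ x₂ *
        (((η x₁ : ℝ) - ∑ x, η x * piCan π ζ η θ τ x) +
          ((η x₂ : ℝ) - ∑ x, η x * piCan π ζ η θ τ x))) τ := by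
  simpa only [fluxHat_swap, piCan_swap] using hasDerivAt_fluxHat_fst (ζ := η) (η := ζ) hπ ξ τ θ

theorem piCan_mul_piCan_mul_eq_of_add_eq (θ τ : ℝ) {x₁ x₂ y₁ y₂ : Ω}
    (hζ : ζ x₁ + ζ x₂ = ζ y₁ + ζ y₂) (hη : η x₁ + η x₂ = η y₁ + η y₂) :
    piCan π ζ η θ τ x₁ * piCan π ζ η θ τ x₂ * (π y₁ * π y₂) =
      piCan π ζ η θ τ y₁ * piCan π ζ η θ τ y₂ * (π x₁ * π x₂) := by
  have hζ' : (ζ x₁ : ℝ) + ζ x₂ = ζ y₁ + ζ y₂ := by exact_mod_cast hζ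
  have hη' : (η x₁ : ℝ) + η x₂ = η y₁ + η y₂ := by exact_mod_cast hη
  have hexp : Real.exp (θ * ζ x₁ + τ * η x₁ - Gfun π ζ η θ τ) *
        Real.exp (θ * ζ x₂ + τ * η x₂ - Gfun π ζ η θ τ) =
      Real.exp (θ * ζ y₁ + τ * η y₁ - Gfun π ζ η θ τ) *
        Real.exp (θ * ζ y₂ + τ * η y₂ - Gfun π ζ η θ τ) := by
    rw [← Real.exp_add, ← Real.exp_add]
    congr 1
    linear_combination θ * hζ' + τ * hη'
  simp only [piCan]
  linear_combination (π x₁ * π x₂ * π y₁ * π y₂) * hexp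

end ExponentialFamily

theorem onsager_symmetry_general
    (ζ η : Ω → ℤ) (r : Ω → Ω → Ω → Ω → ℝ) (π : Ω → ℝ)
    (hr : ∀ ω₁ ω₂ ω₁' ω₂', 0 ≤ r ω₁ ω₂ ω₁' ω₂')
    (hπpos : ∀ ω, 0 < π ω)
    (hA : CondA r ζ η) (hC : CondC π r) (C₁ C₂ : ℝ) (θ τ : ℝ) :
    deriv (fun a => fluxHat π ζ η (phiF r η C₂) a τ) θ =
      deriv (fun b => fluxHat π ζ η (phiF r ζ C₁) θ b) τ := by
  rw [(hasDerivAt_fluxHat_fst hπpos _ θ τ).deriv, (hasDerivAt_fluxHat_snd hπpos _ θ τ).deriv]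
  exact sum_sum_phiF_mul_add_sub_mean_comm (fun ω => (hπpos ω).ne') hr hA hC
    (fun _ _ _ _ h => piCan_mul_piCan_mul_eq_of_add_eq θ τ (hA _ _ _ _ h).1 (hA _ _ _ _ h).2)
    (sum_sub_mean_mul_piCan hπpos θ τ _) (sum_sub_mean_mul_piCan hπpos θ τ _) C₁ C₂

/-- **Onsager-type symmetry relation** (Lemma 1 of the paper):
under conditions (A) and (C), `∂_θ Ψ̂ = ∂_τ Φ̂`. -/
theorem onsager_symmetry
    (ζ η : Ω → ℤ) (r : Ω → Ω → Ω → Ω → ℝ) (π : Ω → ℝ)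
    (hr : ∀ ω₁ ω₂ ω₁' ω₂', 0 ≤ r ω₁ ω₂ ω₁' ω₂')
    (hπpos : ∀ ω, 0 < π ω) (hπsum : ∑ ω : Ω, π ω = 1)
    (hli : LinearIndependent ℝ
      ![(fun _ => (1 : ℝ) : Ω → ℝ), fun ω => (ζ ω : ℝ), fun ω => (η ω : ℝ)])
    (hA : CondA r ζ η) (hC : CondC π r) (C₁ C₂ : ℝ) (θ τ : ℝ) :
    deriv (fun a => fluxHat π ζ η (phiF r η C₂) a τ) θ =
      deriv (fun b => fluxHat π ζ η (phiF r ζ C₁) θ b) τ :=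
  onsager_symmetry_general ζ η r π hr hπpos hA hC C₁ C₂ θ τ

end Stmt0
end
end

section
/- Let S(u,v) := sup_{θ,τ∈ℝ} ( uθ + vτ − G(θ,τ) ) be the convex conjugate (Legendre transform) of G. Then the set D := { (u,v) ∈ ℝ² : S(u,v) < ∞ } equals the convex hull of the finite set { (ζ(ω), η(ω)) : ω ∈ Ω }. -/
open scoped BigOperators

noncomputable section

namespace Stmt4

variable {Ω : Type} [Fintype Ω]

def Gfun (π : Ω → ℝ) (ζ η : Ω → ℤ) (θ τ : ℝ) : ℝ :=
  Real.log (∑ ω : Ω, Real.exp (θ * (ζ ω : ℝ) + τ * (η ω : ℝ)) * π ω)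

/-- The Legendre transform (convex conjugate) of `G`, with values in `EReal`
(the supremum may be `+∞`). -/
def Sfun (π : Ω → ℝ) (ζ η : Ω → ℤ) (p : ℝ × ℝ) : EReal :=
  ⨆ q : ℝ × ℝ, ((p.1 * q.1 + p.2 * q.2 - Gfun π ζ η q.1 q.2 : ℝ) : EReal)

/-!
Write `x ω = (ζ ω, η ω)`. If `p` lies in the hull of the `x ω`, then for every `q` the linear
form `p ↦ p · q` is maximised at some vertex, `p · q ≤ x ω · q`, while the single term `ω` of the
sum gives `G q ≥ x ω · q + log π ω`; hence `S p ≤ max_ω (-log π ω)`. If `p` lies outside the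
hull, which is compact, a functional `f` separates it: `f (x ω) < u < f p`. Along the ray
`t • f` we have `G ≤ t u`, so `S p ≥ t (f p - u) → ∞`.
-/

section LogSumExp

variable {ι : Type*} [Fintype ι] {w : ι → ℝ} {a : ι → ℝ}

theorem log_sum_exp_mul_le (hw : ∀ i, 0 < w i) (hw₁ : ∑ i, w i = 1) {c : ℝ}
    (ha : ∀ i, a i ≤ c) : Real.log (∑ i, Real.exp (a i) * w i) ≤ c := by
  have : Nonempty ι := by
    by_contra h
    simp [not_nonempty_iff.1 h] at hw₁
  have hpos : 0 < ∑ i, Real.exp (a i) * w i :=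
    Finset.sum_pos (fun i _ => mul_pos (Real.exp_pos _) (hw i)) Finset.univ_nonempty
  rw [Real.log_le_iff_le_exp hpos]
  calc ∑ i, Real.exp (a i) * w i ≤ ∑ i, Real.exp c * w i := by
        gcongr with i
        · exact (hw i).le
        · exact ha i
    _ = Real.exp c := by rw [← Finset.mul_sum, hw₁, mul_one]

theorem add_log_le_log_sum_exp_mul (hw : ∀ j, 0 ≤ w j) {i : ι} (hi : 0 < w i) :
    a i + Real.log (w i) ≤ Real.log (∑ j, Real.exp (a j) * w j) := by
  rw [← Real.log_exp (a i), ← Real.log_mul (Real.exp_ne_zero _) hi.ne']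
  exact Real.log_le_log (by positivity) <|
    Finset.single_le_sum (fun j _ => mul_nonneg (Real.exp_pos _).le (hw j)) (Finset.mem_univ i)

end LogSumExp

theorem map_eq_fst_mul_add_snd_mul {F : Type*} [FunLike F (ℝ × ℝ) ℝ]
    [LinearMapClass F ℝ (ℝ × ℝ) ℝ] (f : F) (v : ℝ × ℝ) :
    f v = v.1 * f (1, 0) + v.2 * f (0, 1) := by
  conv_lhs => rw [show v = v.1 • ((1 : ℝ), (0 : ℝ)) + v.2 • ((0 : ℝ), (1 : ℝ)) by ext <;> simp]
  rw [map_add, map_smul, map_smul, smul_eq_mul, smul_eq_mul]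

variable {π : Ω → ℝ} {ζ η : Ω → ℤ}

theorem Sfun_le_of_mem_convexHull (hπpos : ∀ ω, 0 < π ω) {p : ℝ × ℝ}
    (hp : p ∈ convexHull ℝ {p : ℝ × ℝ | ∃ ω : Ω, p = ((ζ ω : ℝ), (η ω : ℝ))}) :
    Sfun π ζ η p ≤ ((⨆ ω, -Real.log (π ω) : ℝ) : EReal) := by
  refine iSup_le fun q => EReal.coe_le_coe_iff.2 ?_
  have hlin : ConvexOn ℝ Set.univ (q.1 • LinearMap.fst ℝ ℝ ℝ + q.2 • LinearMap.snd ℝ ℝ ℝ) :=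
    LinearMap.convexOn _ convex_univ
  obtain ⟨_, ⟨ω, rfl⟩, hpω⟩ := hlin.exists_ge_of_mem_convexHull (Set.subset_univ _) hp
  have hG : q.1 * ζ ω + q.2 * η ω + Real.log (π ω) ≤ Gfun π ζ η q.1 q.2 :=
    add_log_le_log_sum_exp_mul (a := fun ω => q.1 * ζ ω + q.2 * η ω) (fun ω => (hπpos ω).le)
      (hπpos ω)
  have hsup : -Real.log (π ω) ≤ ⨆ ω, -Real.log (π ω) :=
    le_ciSup (f := fun ω => -Real.log (π ω)) (Finite.bddAbove_range _) ω
  simp only [LinearMap.add_apply, LinearMap.smul_apply, LinearMap.fst_apply,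
    LinearMap.snd_apply, smul_eq_mul] at hpω
  linarith

theorem Sfun_eq_top_of_notMem_convexHull (hπpos : ∀ ω, 0 < π ω) (hπsum : ∑ ω : Ω, π ω = 1)
    {p : ℝ × ℝ} (hp : p ∉ convexHull ℝ {p : ℝ × ℝ | ∃ ω : Ω, p = ((ζ ω : ℝ), (η ω : ℝ))}) :
    Sfun π ζ η p = ⊤ := by
  have hfin : {p : ℝ × ℝ | ∃ ω : Ω, p = ((ζ ω : ℝ), (η ω : ℝ))}.Finite :=
    (Set.finite_range fun ω => ((ζ ω : ℝ), (η ω : ℝ))).subset fun _ ⟨ω, h⟩ => ⟨ω, h.symm⟩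
  obtain ⟨f, u, hfu, hup⟩ := geometric_hahn_banach_closed_point (convex_convexHull ℝ _)
    (hfin.isCompact_convexHull (𝕜 := ℝ)).isClosed hp
  have hray : ∀ t : ℝ, 0 ≤ t → t * (f p - u) ≤
      p.1 * (t * f (1, 0)) + p.2 * (t * f (0, 1)) - Gfun π ζ η (t * f (1, 0)) (t * f (0, 1)) := by
    intro t ht
    have hG : Gfun π ζ η (t * f (1, 0)) (t * f (0, 1)) ≤ t * u := by
      refine log_sum_exp_mul_le hπpos hπsum fun ω => ?_
      have hω := hfu _ (subset_convexHull ℝ _ ⟨ω, rfl⟩)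
      rw [map_eq_fst_mul_add_snd_mul f] at hω
      nlinarith
    rw [map_eq_fst_mul_add_snd_mul f p]
    nlinarith
  rw [EReal.eq_top_iff_forall_lt]
  intro y
  obtain ⟨n, hn⟩ := exists_nat_gt (y / (f p - u))
  have hyn : y < n * (f p - u) := (div_lt_iff₀ (sub_pos.2 hup)).1 hn
  exact (EReal.coe_lt_coe_iff.2 (hyn.trans_le (hray n n.cast_nonneg))).trans_le
    (le_iSup (fun q : ℝ × ℝ => ((p.1 * q.1 + p.2 * q.2 - Gfun π ζ η q.1 q.2 : ℝ) : EReal))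
      (n * f (1, 0), n * f (0, 1)))

/-- **The physical domain**: the finiteness domain `D = {(u,v) : S(u,v) < ∞}` of
the Legendre transform of `G` equals the convex hull of `{(ζ(ω),η(ω)) : ω ∈ Ω}`. -/
theorem legendre_domain_eq_convexHull
    (ζ η : Ω → ℤ) (π : Ω → ℝ)
    (hπpos : ∀ ω, 0 < π ω) (hπsum : ∑ ω : Ω, π ω = 1) :
    {p : ℝ × ℝ | Sfun π ζ η p < ⊤} =
      convexHull ℝ {p : ℝ × ℝ | ∃ ω : Ω, p = ((ζ ω : ℝ), (η ω : ℝ))} := by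
  refine Set.Subset.antisymm (fun p hp => ?_) fun p hp => ?_
  · by_contra hp'
    exact hp.ne (Sfun_eq_top_of_notMem_convexHull hπpos hπsum hp')
  · exact (Sfun_le_of_mem_convexHull hπpos hp).trans_lt (EReal.coe_lt_top _)

end Stmt4
end
end

section
/- Under conditions (A) and (C), there exists a smooth function Û : ℝ² → ℝ such that ∂_θ Û(θ,τ) = Φ̂(θ,τ) and ∂_τ Û(θ,τ) = Ψ̂(θ,τ) for all (θ,τ) ∈ ℝ², where Φ̂(θ,τ) := Σ_{ω₁,ω₂∈Ω} φ(ω₁,ω₂) π_{θ,τ}(ω₁) π_{θ,τ}(ω₂) and Ψ̂(θ,τ) := Σ_{ω₁,ω₂∈Ω} ψ(ω₁,ω₂) π_{θ,τ}(ω₁) π_{θ,τ}(ω₂). -/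
open scoped BigOperators

noncomputable section

namespace Stmt6

variable {Ω : Type} [Fintype Ω]

def Gfun (π : Ω → ℝ) (ζ η : Ω → ℤ) (θ τ : ℝ) : ℝ :=
  Real.log (∑ ω : Ω, Real.exp (θ * (ζ ω : ℝ) + τ * (η ω : ℝ)) * π ω)

def piCan (π : Ω → ℝ) (ζ η : Ω → ℤ) (θ τ : ℝ) (ω : Ω) : ℝ :=
  π ω * Real.exp (θ * (ζ ω : ℝ) + τ * (η ω : ℝ) - Gfun π ζ η θ τ)

def CondA (r : Ω → Ω → Ω → Ω → ℝ) (ζ η : Ω → ℤ) : Prop :=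
  ∀ ω₁ ω₂ ω₁' ω₂', 0 < r ω₁ ω₂ ω₁' ω₂' →
    ζ ω₁ + ζ ω₂ = ζ ω₁' + ζ ω₂' ∧ η ω₁ + η ω₂ = η ω₁' + η ω₂'

def Qfun (π : Ω → ℝ) (r : Ω → Ω → Ω → Ω → ℝ) (ω₁ ω₂ : Ω) : ℝ :=
  ∑ ω₁' : Ω, ∑ ω₂' : Ω,
    (π ω₁' * π ω₂' / (π ω₁ * π ω₂) * r ω₁' ω₂' ω₁ ω₂ - r ω₁ ω₂ ω₁' ω₂')

def CondC (π : Ω → ℝ) (r : Ω → Ω → Ω → Ω → ℝ) : Prop :=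
  ∀ ω₁ ω₂ ω₃, Qfun π r ω₁ ω₂ + Qfun π r ω₂ ω₃ + Qfun π r ω₃ ω₁ = 0

def phiF (r : Ω → Ω → Ω → Ω → ℝ) (ζ : Ω → ℤ) (C₁ : ℝ) (ω₁ ω₂ : Ω) : ℝ :=
  (∑ ω₁' : Ω, ∑ ω₂' : Ω, r ω₁ ω₂ ω₁' ω₂' * ((ζ ω₂' : ℝ) - (ζ ω₂ : ℝ))) + C₁

def fluxHat (π : Ω → ℝ) (ζ η : Ω → ℤ) (ξ : Ω → Ω → ℝ) (θ τ : ℝ) : ℝ :=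
  ∑ ω₁ : Ω, ∑ ω₂ : Ω, ξ ω₁ ω₂ * piCan π ζ η θ τ ω₁ * piCan π ζ η θ τ ω₂

/-! ### Auxiliary material -/

private lemma sum4_swap (F : Ω → Ω → Ω → Ω → ℝ) :
    ∑ a : Ω, ∑ b : Ω, ∑ c : Ω, ∑ d : Ω, F a b c d
      = ∑ a : Ω, ∑ b : Ω, ∑ c : Ω, ∑ d : Ω, F c d a b := by
  calc ∑ a : Ω, ∑ b : Ω, ∑ c : Ω, ∑ d : Ω, F a b c d
      = ∑ a : Ω, ∑ c : Ω, ∑ d : Ω, ∑ b : Ω, F a b c d := by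
        refine Finset.sum_congr rfl fun a _ => ?_
        rw [Finset.sum_comm]
        exact Finset.sum_congr rfl fun c _ => Finset.sum_comm
    _ = ∑ c : Ω, ∑ a : Ω, ∑ d : Ω, ∑ b : Ω, F a b c d := Finset.sum_comm
    _ = ∑ c : Ω, ∑ d : Ω, ∑ a : Ω, ∑ b : Ω, F a b c d :=
        Finset.sum_congr rfl fun c _ => Finset.sum_comm

private lemma hasDerivAt_sum_exp1 (c d w : Ω → ℝ) (x : ℝ) :
    HasDerivAt (fun t : ℝ => ∑ ω : Ω, Real.exp (t * c ω + d ω) * w ω)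
      (∑ ω : Ω, c ω * Real.exp (x * c ω + d ω) * w ω) x := by
  apply HasDerivAt.fun_sum
  intro ω _
  have h1 : HasDerivAt (fun t : ℝ => t * c ω + d ω) (c ω) x := by
    simpa using ((hasDerivAt_id x).mul_const (c ω)).add_const (d ω)
  have h2 := h1.exp.mul_const (w ω)
  convert h2 using 1
  · rfl
  ring

private lemma hasDerivAt_sum_exp2 (c d w : Ω → ℝ) (x : ℝ) :
    HasDerivAt (fun t : ℝ => ∑ ω : Ω, Real.exp (d ω + t * c ω) * w ω)
      (∑ ω : Ω, c ω * Real.exp (d ω + x * c ω) * w ω) x := by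
  apply HasDerivAt.fun_sum
  intro ω _
  have h1 : HasDerivAt (fun t : ℝ => d ω + t * c ω) (c ω) x := by
    simpa using ((hasDerivAt_id x).mul_const (c ω)).const_add (d ω)
  have h2 := h1.exp.mul_const (w ω)
  convert h2 using 1
  · rfl
  ring

private lemma Ssum_pos (π : Ω → ℝ) (ζ η : Ω → ℤ) (hπpos : ∀ ω, 0 < π ω)
    (hne : Nonempty Ω) (θ τ : ℝ) :
    0 < ∑ ω : Ω, Real.exp (θ * (ζ ω : ℝ) + τ * (η ω : ℝ)) * π ω :=
  Finset.sum_pos (fun ω _ => mul_pos (Real.exp_pos _) (hπpos ω)) Finset.univ_nonempty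

private lemma piCan_eq (π : Ω → ℝ) (ζ η : Ω → ℤ) (hπpos : ∀ ω, 0 < π ω)
    (hne : Nonempty Ω) (θ τ : ℝ) (ω : Ω) :
    piCan π ζ η θ τ ω = Real.exp (θ * (ζ ω : ℝ) + τ * (η ω : ℝ)) * π ω /
      (∑ ω' : Ω, Real.exp (θ * (ζ ω' : ℝ) + τ * (η ω' : ℝ)) * π ω') := by
  have hS := Ssum_pos π ζ η hπpos hne θ τ
  simp only [piCan, Gfun]
  rw [Real.exp_sub, Real.exp_log hS]
  ring

private lemma sum_weight_piCan (π : Ω → ℝ) (ζ η : Ω → ℤ) (hπpos : ∀ ω, 0 < π ω)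
    (hne : Nonempty Ω) (w : Ω → ℝ) (θ τ : ℝ) :
    ∑ ω : Ω, w ω * piCan π ζ η θ τ ω
      = (∑ ω : Ω, Real.exp (θ * (ζ ω : ℝ) + τ * (η ω : ℝ)) * (w ω * π ω)) /
        (∑ ω : Ω, Real.exp (θ * (ζ ω : ℝ) + τ * (η ω : ℝ)) * π ω) := by
  rw [Finset.sum_div]
  refine Finset.sum_congr rfl fun ω _ => ?_
  rw [piCan_eq π ζ η hπpos hne θ τ ω]
  ring

private lemma piCan_sum (π : Ω → ℝ) (ζ η : Ω → ℤ) (hπpos : ∀ ω, 0 < π ω)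
    (hne : Nonempty Ω) (θ τ : ℝ) :
    ∑ ω : Ω, piCan π ζ η θ τ ω = 1 := by
  have hS := Ssum_pos π ζ η hπpos hne θ τ
  have h : ∑ ω : Ω, piCan π ζ η θ τ ω
      = ∑ ω : Ω, Real.exp (θ * (ζ ω : ℝ) + τ * (η ω : ℝ)) * π ω /
        (∑ ω' : Ω, Real.exp (θ * (ζ ω' : ℝ) + τ * (η ω' : ℝ)) * π ω') :=
    Finset.sum_congr rfl fun ω _ => piCan_eq π ζ η hπpos hne θ τ ω
  rw [h, ← Finset.sum_div, div_self hS.ne']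

/-- The key algebraic identity: under (A) and the cocycle form of `Q`, the flux
`Φ̂` has the closed form `Cg + E[f]E[g] - E[fg]`. -/
private lemma flux_eq (ζ η : Ω → ℤ) (r : Ω → Ω → Ω → Ω → ℝ) (π : Ω → ℝ) (f : Ω → ℝ)
    (hr : ∀ ω₁ ω₂ ω₁' ω₂', 0 ≤ r ω₁ ω₂ ω₁' ω₂')
    (hπpos : ∀ ω, 0 < π ω) (hne : Nonempty Ω)
    (hA : CondA r ζ η)
    (hQ : ∀ a b, Qfun π r a b = f a - f b)
    (g : Ω → ℤ) (Cg θ τ : ℝ) :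
    fluxHat π ζ η (phiF r g Cg) θ τ =
      Cg + (∑ ω : Ω, f ω * piCan π ζ η θ τ ω) * (∑ ω : Ω, (g ω : ℝ) * piCan π ζ η θ τ ω)
        - ∑ ω : Ω, f ω * (g ω : ℝ) * piCan π ζ η θ τ ω := by
  classical
  set p : Ω → ℝ := piCan π ζ η θ τ with hp
  have hpsum : (∑ ω : Ω, p ω) = 1 := piCan_sum π ζ η hπpos hne θ τ
  -- per-term stationarity transfer from π to p, via condition (A)
  have hterm : ∀ a b c d : Ω,
      p c * p d * (π a * π b / (π c * π d) * r a b c d) = p a * p b * r a b c d := by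
    intro a b c d
    rcases (hr a b c d).eq_or_lt with h | h
    · rw [← h]; ring
    · obtain ⟨h1, h2⟩ := hA a b c d h
      have h1' : (ζ a : ℝ) + ζ b = ζ c + ζ d := by exact_mod_cast h1
      have h2' : (η a : ℝ) + η b = η c + η d := by exact_mod_cast h2
      have hexp : Real.exp (θ * (ζ c : ℝ) + τ * (η c : ℝ) - Gfun π ζ η θ τ) *
            Real.exp (θ * (ζ d : ℝ) + τ * (η d : ℝ) - Gfun π ζ η θ τ)
          = Real.exp (θ * (ζ a : ℝ) + τ * (η a : ℝ) - Gfun π ζ η θ τ) *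
            Real.exp (θ * (ζ b : ℝ) + τ * (η b : ℝ) - Gfun π ζ η θ τ) := by
        rw [← Real.exp_add, ← Real.exp_add]
        congr 1
        linear_combination (-θ) * h1' + (-τ) * h2'
      have hc := (hπpos c).ne'
      have hd := (hπpos d).ne'
      simp only [hp, piCan]
      field_simp
      linear_combination (π a * π b) * hexp
  -- p·p·Q as a double sum
  have R3 : ∀ ω₁ ω₂ : Ω, p ω₁ * p ω₂ * Qfun π r ω₁ ω₂
      = ∑ ω₁' : Ω, ∑ ω₂' : Ω,
          (p ω₁' * p ω₂' * r ω₁' ω₂' ω₁ ω₂ - p ω₁ * p ω₂ * r ω₁ ω₂ ω₁' ω₂') := by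
    intro ω₁ ω₂
    rw [Qfun, Finset.mul_sum]
    refine Finset.sum_congr rfl fun a _ => ?_
    rw [Finset.mul_sum]
    refine Finset.sum_congr rfl fun b _ => ?_
    rw [mul_sub, hterm a b ω₁ ω₂]
  -- the main quadruple-sum identity
  have L1 : (∑ ω₁ : Ω, ∑ ω₂ : Ω,
        (∑ ω₁' : Ω, ∑ ω₂' : Ω, r ω₁ ω₂ ω₁' ω₂' * ((g ω₂' : ℝ) - (g ω₂ : ℝ))) * p ω₁ * p ω₂)
      = (∑ ω₁ : Ω, ∑ ω₂ : Ω, ∑ ω₁' : Ω, ∑ ω₂' : Ω,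
          (g ω₂' : ℝ) * (p ω₁ * p ω₂ * r ω₁ ω₂ ω₁' ω₂'))
        - (∑ ω₁ : Ω, ∑ ω₂ : Ω, ∑ ω₁' : Ω, ∑ ω₂' : Ω,
          (g ω₂ : ℝ) * (p ω₁ * p ω₂ * r ω₁ ω₂ ω₁' ω₂')) := by
    simp only [Finset.sum_mul, ← Finset.sum_sub_distrib]
    refine Finset.sum_congr rfl fun ω₁ _ => Finset.sum_congr rfl fun ω₂ _ =>
      Finset.sum_congr rfl fun a _ => Finset.sum_congr rfl fun b _ => by ring
  have R1 : (∑ ω : Ω, f ω * p ω) * (∑ ω : Ω, (g ω : ℝ) * p ω)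
        - ∑ ω : Ω, f ω * (g ω : ℝ) * p ω
      = ∑ ω₁ : Ω, ∑ ω₂ : Ω, (g ω₂ : ℝ) * (p ω₁ * p ω₂ * (f ω₁ - f ω₂)) := by
    have h2 : (∑ ω : Ω, f ω * (g ω : ℝ) * p ω)
        = (∑ ω₁ : Ω, p ω₁) * (∑ ω₂ : Ω, f ω₂ * (g ω₂ : ℝ) * p ω₂) := by
      rw [hpsum, one_mul]
    rw [h2, Finset.sum_mul_sum, Finset.sum_mul_sum, ← Finset.sum_sub_distrib]
    refine Finset.sum_congr rfl fun ω₁ _ => ?_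
    rw [← Finset.sum_sub_distrib]
    exact Finset.sum_congr rfl fun ω₂ _ => by ring
  have hR : (∑ ω₁ : Ω, ∑ ω₂ : Ω, (g ω₂ : ℝ) * (p ω₁ * p ω₂ * (f ω₁ - f ω₂)))
      = (∑ ω₁ : Ω, ∑ ω₂ : Ω, ∑ ω₁' : Ω, ∑ ω₂' : Ω,
          (g ω₂' : ℝ) * (p ω₁ * p ω₂ * r ω₁ ω₂ ω₁' ω₂'))
        - (∑ ω₁ : Ω, ∑ ω₂ : Ω, ∑ ω₁' : Ω, ∑ ω₂' : Ω,
          (g ω₂ : ℝ) * (p ω₁ * p ω₂ * r ω₁ ω₂ ω₁' ω₂')) := by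
    calc (∑ ω₁ : Ω, ∑ ω₂ : Ω, (g ω₂ : ℝ) * (p ω₁ * p ω₂ * (f ω₁ - f ω₂)))
        = ∑ ω₁ : Ω, ∑ ω₂ : Ω, (g ω₂ : ℝ) * (p ω₁ * p ω₂ * Qfun π r ω₁ ω₂) := by
          refine Finset.sum_congr rfl fun ω₁ _ => Finset.sum_congr rfl fun ω₂ _ => ?_
          rw [hQ]
      _ = ∑ ω₁ : Ω, ∑ ω₂ : Ω, (g ω₂ : ℝ) * (∑ ω₁' : Ω, ∑ ω₂' : Ω,
            (p ω₁' * p ω₂' * r ω₁' ω₂' ω₁ ω₂ - p ω₁ * p ω₂ * r ω₁ ω₂ ω₁' ω₂')) := by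
          refine Finset.sum_congr rfl fun ω₁ _ => Finset.sum_congr rfl fun ω₂ _ => ?_
          rw [R3]
      _ = ∑ ω₁ : Ω, ∑ ω₂ : Ω, ∑ ω₁' : Ω, ∑ ω₂' : Ω,
            ((g ω₂ : ℝ) * (p ω₁' * p ω₂' * r ω₁' ω₂' ω₁ ω₂)
              - (g ω₂ : ℝ) * (p ω₁ * p ω₂ * r ω₁ ω₂ ω₁' ω₂')) := by
          simp only [Finset.mul_sum, mul_sub]
      _ = (∑ ω₁ : Ω, ∑ ω₂ : Ω, ∑ ω₁' : Ω, ∑ ω₂' : Ω,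
            (g ω₂ : ℝ) * (p ω₁' * p ω₂' * r ω₁' ω₂' ω₁ ω₂))
          - (∑ ω₁ : Ω, ∑ ω₂ : Ω, ∑ ω₁' : Ω, ∑ ω₂' : Ω,
            (g ω₂ : ℝ) * (p ω₁ * p ω₂ * r ω₁ ω₂ ω₁' ω₂')) := by
          simp only [Finset.sum_sub_distrib]
      _ = (∑ ω₁ : Ω, ∑ ω₂ : Ω, ∑ ω₁' : Ω, ∑ ω₂' : Ω,
            (g ω₂' : ℝ) * (p ω₁ * p ω₂ * r ω₁ ω₂ ω₁' ω₂'))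
          - (∑ ω₁ : Ω, ∑ ω₂ : Ω, ∑ ω₁' : Ω, ∑ ω₂' : Ω,
            (g ω₂ : ℝ) * (p ω₁ * p ω₂ * r ω₁ ω₂ ω₁' ω₂')) := by
          congr 1
          exact sum4_swap (fun a b c d => (g b : ℝ) * (p c * p d * r c d a b))
  have hmain : (∑ ω₁ : Ω, ∑ ω₂ : Ω,
        (∑ ω₁' : Ω, ∑ ω₂' : Ω, r ω₁ ω₂ ω₁' ω₂' * ((g ω₂' : ℝ) - (g ω₂ : ℝ))) * p ω₁ * p ω₂)
      = (∑ ω : Ω, f ω * p ω) * (∑ ω : Ω, (g ω : ℝ) * p ω)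
        - ∑ ω : Ω, f ω * (g ω : ℝ) * p ω := by
    rw [L1, R1, hR]
  have hCg : (∑ ω₁ : Ω, ∑ ω₂ : Ω, Cg * (p ω₁ * p ω₂)) = Cg := by
    have h : Cg * ((∑ ω : Ω, p ω) * (∑ ω : Ω, p ω))
        = ∑ ω₁ : Ω, ∑ ω₂ : Ω, Cg * (p ω₁ * p ω₂) := by
      rw [Finset.sum_mul_sum, Finset.mul_sum]
      exact Finset.sum_congr rfl fun ω₁ _ => Finset.mul_sum _ _ _
    rw [← h, hpsum]
    ring
  have hsplit : fluxHat π ζ η (phiF r g Cg) θ τ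
      = (∑ ω₁ : Ω, ∑ ω₂ : Ω,
          (∑ ω₁' : Ω, ∑ ω₂' : Ω, r ω₁ ω₂ ω₁' ω₂' * ((g ω₂' : ℝ) - (g ω₂ : ℝ))) * p ω₁ * p ω₂)
        + (∑ ω₁ : Ω, ∑ ω₂ : Ω, Cg * (p ω₁ * p ω₂)) := by
    rw [fluxHat, ← Finset.sum_add_distrib]
    refine Finset.sum_congr rfl fun ω₁ _ => ?_
    rw [← Finset.sum_add_distrib]
    refine Finset.sum_congr rfl fun ω₂ _ => ?_
    rw [phiF]
    ring
  rw [hsplit, hmain, hCg]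
  ring

/-- The explicit potential. -/
private def Ufun (π : Ω → ℝ) (ζ η : Ω → ℤ) (f : Ω → ℝ) (C₁ C₂ : ℝ) (θ τ : ℝ) : ℝ :=
  C₁ * θ + C₂ * τ -
    (∑ ω : Ω, Real.exp (θ * (ζ ω : ℝ) + τ * (η ω : ℝ)) * (f ω * π ω)) /
    (∑ ω : Ω, Real.exp (θ * (ζ ω : ℝ) + τ * (η ω : ℝ)) * π ω)

private lemma Ufun_contDiff (π : Ω → ℝ) (ζ η : Ω → ℤ) (f : Ω → ℝ) (C₁ C₂ : ℝ)
    (hπpos : ∀ ω, 0 < π ω) (hne : Nonempty Ω) :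
    ContDiff ℝ (⊤ : ℕ∞) (fun q : ℝ × ℝ => Ufun π ζ η f C₁ C₂ q.1 q.2) := by
  have hS : ContDiff ℝ (⊤ : ℕ∞)
      (fun q : ℝ × ℝ => ∑ ω : Ω, Real.exp (q.1 * (ζ ω : ℝ) + q.2 * (η ω : ℝ)) * π ω) :=
    ContDiff.sum fun ω _ =>
      (Real.contDiff_exp.comp ((contDiff_fst.mul contDiff_const).add
        (contDiff_snd.mul contDiff_const))).mul contDiff_const
  have hN : ContDiff ℝ (⊤ : ℕ∞)
      (fun q : ℝ × ℝ => ∑ ω : Ω, Real.exp (q.1 * (ζ ω : ℝ) + q.2 * (η ω : ℝ)) * (f ω * π ω)) :=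
    ContDiff.sum fun ω _ =>
      (Real.contDiff_exp.comp ((contDiff_fst.mul contDiff_const).add
        (contDiff_snd.mul contDiff_const))).mul contDiff_const
  exact ((contDiff_const.mul contDiff_fst).add (contDiff_const.mul contDiff_snd)).sub
    (hN.div hS fun q => (Ssum_pos π ζ η hπpos hne q.1 q.2).ne')

private lemma Ufun_hasDerivAt_theta (π : Ω → ℝ) (ζ η : Ω → ℤ) (f : Ω → ℝ) (C₁ C₂ : ℝ)
    (hπpos : ∀ ω, 0 < π ω) (hne : Nonempty Ω) (θ τ : ℝ) :
    HasDerivAt (fun a => Ufun π ζ η f C₁ C₂ a τ)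
      (C₁ + (∑ ω : Ω, f ω * piCan π ζ η θ τ ω) * (∑ ω : Ω, (ζ ω : ℝ) * piCan π ζ η θ τ ω)
        - ∑ ω : Ω, f ω * (ζ ω : ℝ) * piCan π ζ η θ τ ω) θ := by
  have hS := Ssum_pos π ζ η hπpos hne θ τ
  have hN' : HasDerivAt
      (fun a : ℝ => ∑ ω : Ω, Real.exp (a * (ζ ω : ℝ) + τ * (η ω : ℝ)) * (f ω * π ω))
      (∑ ω : Ω, (ζ ω : ℝ) * Real.exp (θ * (ζ ω : ℝ) + τ * (η ω : ℝ)) * (f ω * π ω)) θ :=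
    hasDerivAt_sum_exp1 _ _ _ θ
  have hS' : HasDerivAt
      (fun a : ℝ => ∑ ω : Ω, Real.exp (a * (ζ ω : ℝ) + τ * (η ω : ℝ)) * π ω)
      (∑ ω : Ω, (ζ ω : ℝ) * Real.exp (θ * (ζ ω : ℝ) + τ * (η ω : ℝ)) * π ω) θ :=
    hasDerivAt_sum_exp1 _ _ _ θ
  have hdiv := hN'.div hS' hS.ne'
  have hlin : HasDerivAt (fun a : ℝ => C₁ * a + C₂ * τ) C₁ θ := by
    simpa using ((hasDerivAt_id θ).const_mul C₁).add_const (C₂ * τ)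
  have hU := hlin.sub hdiv
  have key : C₁ -
      ((∑ ω : Ω, (ζ ω : ℝ) * Real.exp (θ * (ζ ω : ℝ) + τ * (η ω : ℝ)) * (f ω * π ω)) *
          (∑ ω : Ω, Real.exp (θ * (ζ ω : ℝ) + τ * (η ω : ℝ)) * π ω) -
        (∑ ω : Ω, Real.exp (θ * (ζ ω : ℝ) + τ * (η ω : ℝ)) * (f ω * π ω)) *
          (∑ ω : Ω, (ζ ω : ℝ) * Real.exp (θ * (ζ ω : ℝ) + τ * (η ω : ℝ)) * π ω)) /
        (∑ ω : Ω, Real.exp (θ * (ζ ω : ℝ) + τ * (η ω : ℝ)) * π ω) ^ 2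
      = C₁ + (∑ ω : Ω, f ω * piCan π ζ η θ τ ω) * (∑ ω : Ω, (ζ ω : ℝ) * piCan π ζ η θ τ ω)
        - ∑ ω : Ω, f ω * (ζ ω : ℝ) * piCan π ζ η θ τ ω := by
    rw [sum_weight_piCan π ζ η hπpos hne f θ τ,
      sum_weight_piCan π ζ η hπpos hne (fun ω => (ζ ω : ℝ)) θ τ,
      sum_weight_piCan π ζ η hπpos hne (fun ω => f ω * (ζ ω : ℝ)) θ τ]
    have e1 : (∑ ω : Ω, (ζ ω : ℝ) * Real.exp (θ * (ζ ω : ℝ) + τ * (η ω : ℝ)) * (f ω * π ω))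
        = ∑ ω : Ω, Real.exp (θ * (ζ ω : ℝ) + τ * (η ω : ℝ)) * (f ω * (ζ ω : ℝ) * π ω) :=
      Finset.sum_congr rfl fun ω _ => by ring
    have e2 : (∑ ω : Ω, (ζ ω : ℝ) * Real.exp (θ * (ζ ω : ℝ) + τ * (η ω : ℝ)) * π ω)
        = ∑ ω : Ω, Real.exp (θ * (ζ ω : ℝ) + τ * (η ω : ℝ)) * ((ζ ω : ℝ) * π ω) :=
      Finset.sum_congr rfl fun ω _ => by ring
    rw [e1, e2]
    field_simp
    ring
  rw [key] at hU
  exact hU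

private lemma Ufun_hasDerivAt_tau (π : Ω → ℝ) (ζ η : Ω → ℤ) (f : Ω → ℝ) (C₁ C₂ : ℝ)
    (hπpos : ∀ ω, 0 < π ω) (hne : Nonempty Ω) (θ τ : ℝ) :
    HasDerivAt (fun b => Ufun π ζ η f C₁ C₂ θ b)
      (C₂ + (∑ ω : Ω, f ω * piCan π ζ η θ τ ω) * (∑ ω : Ω, (η ω : ℝ) * piCan π ζ η θ τ ω)
        - ∑ ω : Ω, f ω * (η ω : ℝ) * piCan π ζ η θ τ ω) τ := by
  have hS := Ssum_pos π ζ η hπpos hne θ τ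
  have hN' : HasDerivAt
      (fun b : ℝ => ∑ ω : Ω, Real.exp (θ * (ζ ω : ℝ) + b * (η ω : ℝ)) * (f ω * π ω))
      (∑ ω : Ω, (η ω : ℝ) * Real.exp (θ * (ζ ω : ℝ) + τ * (η ω : ℝ)) * (f ω * π ω)) τ :=
    hasDerivAt_sum_exp2 _ _ _ τ
  have hS' : HasDerivAt
      (fun b : ℝ => ∑ ω : Ω, Real.exp (θ * (ζ ω : ℝ) + b * (η ω : ℝ)) * π ω)
      (∑ ω : Ω, (η ω : ℝ) * Real.exp (θ * (ζ ω : ℝ) + τ * (η ω : ℝ)) * π ω) τ :=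
    hasDerivAt_sum_exp2 _ _ _ τ
  have hdiv := hN'.div hS' hS.ne'
  have hlin : HasDerivAt (fun b : ℝ => C₁ * θ + C₂ * b) C₂ τ := by
    simpa using ((hasDerivAt_id τ).const_mul C₂).const_add (C₁ * θ)
  have hU := hlin.sub hdiv
  have key : C₂ -
      ((∑ ω : Ω, (η ω : ℝ) * Real.exp (θ * (ζ ω : ℝ) + τ * (η ω : ℝ)) * (f ω * π ω)) *
          (∑ ω : Ω, Real.exp (θ * (ζ ω : ℝ) + τ * (η ω : ℝ)) * π ω) -
        (∑ ω : Ω, Real.exp (θ * (ζ ω : ℝ) + τ * (η ω : ℝ)) * (f ω * π ω)) *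
          (∑ ω : Ω, (η ω : ℝ) * Real.exp (θ * (ζ ω : ℝ) + τ * (η ω : ℝ)) * π ω)) /
        (∑ ω : Ω, Real.exp (θ * (ζ ω : ℝ) + τ * (η ω : ℝ)) * π ω) ^ 2
      = C₂ + (∑ ω : Ω, f ω * piCan π ζ η θ τ ω) * (∑ ω : Ω, (η ω : ℝ) * piCan π ζ η θ τ ω)
        - ∑ ω : Ω, f ω * (η ω : ℝ) * piCan π ζ η θ τ ω := by
    rw [sum_weight_piCan π ζ η hπpos hne f θ τ,
      sum_weight_piCan π ζ η hπpos hne (fun ω => (η ω : ℝ)) θ τ,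
      sum_weight_piCan π ζ η hπpos hne (fun ω => f ω * (η ω : ℝ)) θ τ]
    have e1 : (∑ ω : Ω, (η ω : ℝ) * Real.exp (θ * (ζ ω : ℝ) + τ * (η ω : ℝ)) * (f ω * π ω))
        = ∑ ω : Ω, Real.exp (θ * (ζ ω : ℝ) + τ * (η ω : ℝ)) * (f ω * (η ω : ℝ) * π ω) :=
      Finset.sum_congr rfl fun ω _ => by ring
    have e2 : (∑ ω : Ω, (η ω : ℝ) * Real.exp (θ * (ζ ω : ℝ) + τ * (η ω : ℝ)) * π ω)
        = ∑ ω : Ω, Real.exp (θ * (ζ ω : ℝ) + τ * (η ω : ℝ)) * ((η ω : ℝ) * π ω) :=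
      Finset.sum_congr rfl fun ω _ => by ring
    rw [e1, e2]
    field_simp
    ring
  rw [key] at hU
  -- align the function: Ufun π ζ η f C₁ C₂ θ b matches the above
  exact hU

/-- **Existence of a flux potential**: under conditions (A) and (C) there is a
smooth function `Û : ℝ² → ℝ` with `∂_θ Û = Φ̂` and `∂_τ Û = Ψ̂`. -/
theorem exists_flux_potential
    (ζ η : Ω → ℤ) (r : Ω → Ω → Ω → Ω → ℝ) (π : Ω → ℝ)
    (hr : ∀ ω₁ ω₂ ω₁' ω₂', 0 ≤ r ω₁ ω₂ ω₁' ω₂')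
    (hπpos : ∀ ω, 0 < π ω) (hπsum : ∑ ω : Ω, π ω = 1)
    (hli : LinearIndependent ℝ
      ![(fun _ => (1 : ℝ) : Ω → ℝ), fun ω => (ζ ω : ℝ), fun ω => (η ω : ℝ)])
    (hA : CondA r ζ η) (hC : CondC π r) (C₁ C₂ : ℝ) :
    ∃ U : ℝ → ℝ → ℝ,
      ContDiff ℝ (⊤ : ℕ∞) (fun p : ℝ × ℝ => U p.1 p.2) ∧
      (∀ θ τ : ℝ,
        deriv (fun a => U a τ) θ = fluxHat π ζ η (phiF r ζ C₁) θ τ ∧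
        deriv (fun b => U θ b) τ = fluxHat π ζ η (phiF r η C₂) θ τ) := by
  classical
  have hne : Nonempty Ω := by
    by_contra h
    rw [not_nonempty_iff] at h
    rw [Finset.univ_eq_empty, Finset.sum_empty] at hπsum
    exact zero_ne_one hπsum
  obtain ⟨ω₀⟩ := id hne
  set f : Ω → ℝ := fun ω => Qfun π r ω ω₀ with hfdef
  have hQ0 : ∀ ω, Qfun π r ω ω = 0 := by
    intro ω; have := hC ω ω ω; linarith
  have hQa : ∀ a b, Qfun π r a b = - Qfun π r b a := by
    intro a b
    have h1 := hC a b b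
    have h2 := hQ0 b
    linarith
  have hQ : ∀ a b, Qfun π r a b = f a - f b := by
    intro a b
    have h1 := hC a b ω₀
    have h2 := hQa ω₀ a
    simp only [hfdef]
    linarith
  refine ⟨Ufun π ζ η f C₁ C₂, Ufun_contDiff π ζ η f C₁ C₂ hπpos hne, fun θ τ => ⟨?_, ?_⟩⟩
  · rw [(Ufun_hasDerivAt_theta π ζ η f C₁ C₂ hπpos hne θ τ).deriv,
      flux_eq ζ η r π f hr hπpos hne hA hQ ζ C₁ θ τ]
  · rw [(Ufun_hasDerivAt_tau π ζ η f C₁ C₂ hπpos hne θ τ).deriv,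
      flux_eq ζ η r π f hr hπpos hne hA hQ η C₂ θ τ]

end Stmt6
end
end
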